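/- Define π on the span of the long roots of F_4 by π(e_1+e_2) = (a_1,0,0), π(e_1−e_2) = (b_1,b_1,b_1), π(e_3+e_4) = (b_1,b_2,b_2), π(e_3−e_4) = (b_1,b_3,b_3), where for a cyclic rotation (i,j,k) of (1,2,3), a_i = e_j − e_k and b_i = (e_j + e_k − 2e_i)/3 in ℝ³. Then π extends to a linear isometry of ℝ⁴ onto its image in ℝ⁹, and it maps the 24 long roots {±e_i ± e_j : 1 ≤ i < j ≤ 4} of F_4 bijectively onto the set ±{(a_i,0,0) : 1 ≤ i ≤ 3} ∪ ±{(b_i,b_j,b_j) : 1 ≤ i,j ≤ 3}. -/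

import Mathlib

/-! The prescribed values make `π(e₁ ± e₂)`, `π(e₃ ± e₄)` known, so `π(eᵢ)` is obtained by halving
sums and differences. The Gram matrix of `a₁, b₁, b₂, b₃` (`‖aᵢ‖² = 2`, `⟪aᵢ, bᵢ⟫ = 0`,
`‖bᵢ‖² = 2/3`, `⟪bᵢ, bⱼ⟫ = -1/3`) shows that these four images are orthonormal, so `π` is an
isometry, in particular injective. A direct computation sends the twelve roots `eᵢ ± eⱼ`, `i < j`,
to the twelve vectors `(aᵢ, 0, 0)`, `(bᵢ, bⱼ, bⱼ)` up to sign; since both root sets are closed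
under negation, this gives the bijection. -/

open scoped RealInnerProductSpace

/-- The standard basis vector `e_i` of `ℝ⁴`. -/
noncomputable def e4 (i : Fin 4) : EuclideanSpace ℝ (Fin 4) :=
  EuclideanSpace.single i 1

/-- The standard basis vector `e_i` of `ℝ³`. -/
noncomputable def e3 (i : Fin 3) : EuclideanSpace ℝ (Fin 3) :=
  EuclideanSpace.single i 1

/-- `a_i = e_j − e_k` for `(i,j,k)` a cyclic rotation of `(1,2,3)`. -/
noncomputable def a (i : Fin 3) : EuclideanSpace ℝ (Fin 3) :=
  e3 (i + 1) - e3 (i + 2)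

/-- `b_i = (e_j + e_k − 2e_i)/3` for `(i,j,k)` a cyclic rotation of `(1,2,3)`. -/
noncomputable def b (i : Fin 3) : EuclideanSpace ℝ (Fin 3) :=
  (1 / 3 : ℝ) • (e3 (i + 1) + e3 (i + 2) - (2 : ℝ) • e3 i)

/-- `ℝ⁹` realized as triples `(r, s, t)` of vectors of `ℝ³`, with the `ℓ²` product
inner-product structure. -/
abbrev V9 : Type := PiLp 2 fun _ : Fin 3 => EuclideanSpace ℝ (Fin 3)

/-- The triple `(r, s, t) ∈ ℝ⁹`. -/
noncomputable def trip (r s t : EuclideanSpace ℝ (Fin 3)) : V9 :=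
  (WithLp.equiv 2 _).symm ![r, s, t]

/-- Long roots of `F₄`: `±e_i ± e_j`, `i < j`. -/
def LongF4 : Set (EuclideanSpace ℝ (Fin 4)) :=
  {v | ∃ i j : Fin 4, i < j ∧ ∃ ε δ : ℝ, (ε = 1 ∨ ε = -1) ∧ (δ = 1 ∨ δ = -1) ∧
    v = ε • e4 i + δ • e4 j}

/-- Imaginary roots of `E₆`: `±{(a_i,0,0)} ∪ ±{(b_i,b_j,b_j)}`. -/
noncomputable def ImE6 : Set V9 :=
  {v | (∃ i : Fin 3, v = trip (a i) 0 0 ∨ v = -trip (a i) 0 0) ∨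
    (∃ i j : Fin 3, v = trip (b i) (b j) (b j) ∨ v = -trip (b i) (b j) (b j))}

section Triples

variable (r s t r' s' t' : EuclideanSpace ℝ (Fin 3))

@[simp] lemma trip_add : trip r s t + trip r' s' t' = trip (r + r') (s + s') (t + t') := by
  ext i : 1; fin_cases i <;> rfl

@[simp] lemma trip_sub : trip r s t - trip r' s' t' = trip (r - r') (s - s') (t - t') := by
  ext i : 1; fin_cases i <;> rfl

@[simp] lemma trip_smul (c : ℝ) : c • trip r s t = trip (c • r) (c • s) (c • t) := by
  ext i : 1; fin_cases i <;> rfl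

@[simp] lemma neg_trip : -trip r s t = trip (-r) (-s) (-t) := by
  ext i : 1; fin_cases i <;> rfl

lemma trip_inj : trip r s t = trip r' s' t' ↔ r = r' ∧ s = s' ∧ t = t' := by
  refine ⟨fun h => ⟨congrArg (· 0) h, congrArg (· 1) h, congrArg (· 2) h⟩, ?_⟩
  rintro ⟨rfl, rfl, rfl⟩
  rfl

lemma inner_trip : ⟪trip r s t, trip r' s' t'⟫ = ⟪r, r'⟫ + ⟪s, s'⟫ + ⟪t, t'⟫ := by
  simp [trip, PiLp.inner_apply, Fin.sum_univ_three]

end Triples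

lemma inner_a_self (i : Fin 3) : ⟪a i, a i⟫ = 2 := by
  fin_cases i <;> rw [PiLp.inner_apply] <;>
    simp [a, e3, Fin.sum_univ_three, PiLp.single_apply] <;> norm_num

lemma inner_a_b_self (i : Fin 3) : ⟪a i, b i⟫ = 0 := by
  fin_cases i <;> rw [PiLp.inner_apply] <;> simp [a, b, e3, Fin.sum_univ_three, PiLp.single_apply]

lemma inner_b_a_self (i : Fin 3) : ⟪b i, a i⟫ = 0 := by
  rw [real_inner_comm, inner_a_b_self]

lemma inner_b_b (i j : Fin 3) : ⟪b i, b j⟫ = if i = j then 2 / 3 else -1 / 3 := by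
  fin_cases i <;> fin_cases j <;> rw [PiLp.inner_apply] <;>
    simp [b, e3, Fin.sum_univ_three, PiLp.single_apply] <;> norm_num

/-- `π(eᵢ)`, solved from the prescribed values on `e₁ ± e₂` and `e₃ ± e₄`. -/
noncomputable def piOnBasis : Fin 4 → V9 :=
  ![(1 / 2 : ℝ) • (trip (a 0) 0 0 + trip (b 0) (b 0) (b 0)),
    (1 / 2 : ℝ) • (trip (a 0) 0 0 - trip (b 0) (b 0) (b 0)),
    (1 / 2 : ℝ) • (trip (b 0) (b 1) (b 1) + trip (b 0) (b 2) (b 2)),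
    (1 / 2 : ℝ) • (trip (b 0) (b 1) (b 1) - trip (b 0) (b 2) (b 2))]

lemma orthonormal_piOnBasis : Orthonormal ℝ piOnBasis := by
  rw [orthonormal_iff_ite]
  intro i j
  fin_cases i <;> fin_cases j <;>
    simp only [piOnBasis, Fin.reduceFinMk, Fin.isValue, Matrix.cons_val, trip_add, trip_sub,
      trip_smul, inner_trip, inner_add_left, inner_add_right, inner_sub_left, inner_sub_right,
      real_inner_smul_left, real_inner_smul_right, inner_zero_left, inner_zero_right, inner_a_self,
      inner_a_b_self, inner_b_a_self, inner_b_b] <;>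
    norm_num [Fin.ext_iff]

noncomputable def stdBasisF4 : Module.Basis (Fin 4) ℝ (EuclideanSpace ℝ (Fin 4)) :=
  (EuclideanSpace.basisFun (Fin 4) ℝ).toBasis

lemma stdBasisF4_apply (i : Fin 4) : stdBasisF4 i = e4 i := by
  simp [stdBasisF4, e4]

lemma orthonormal_stdBasisF4 : Orthonormal ℝ stdBasisF4 := by
  simp [stdBasisF4]

noncomputable def piF4 : EuclideanSpace ℝ (Fin 4) →ₗᵢ[ℝ] V9 :=
  (stdBasisF4.constr ℝ piOnBasis).isometryOfOrthonormal orthonormal_stdBasisF4 <| by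
    convert orthonormal_piOnBasis
    exact funext fun i => stdBasisF4.constr_basis ℝ piOnBasis i

lemma piF4_e4 (i : Fin 4) : piF4 (e4 i) = piOnBasis i := by
  rw [← stdBasisF4_apply]
  exact stdBasisF4.constr_basis ℝ piOnBasis i

lemma piF4_e4_zero_add_e4_one : piF4 (e4 0 + e4 1) = trip (a 0) 0 0 := by
  simp [piF4_e4, piOnBasis, trip_inj, a, b]
  module

lemma piF4_e4_zero_sub_e4_one : piF4 (e4 0 - e4 1) = trip (b 0) (b 0) (b 0) := by
  simp [piF4_e4, piOnBasis, trip_inj, a, b]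
  and_intros <;> module

lemma piF4_e4_zero_add_e4_two : piF4 (e4 0 + e4 2) = -trip (a 2) 0 0 := by
  simp [piF4_e4, piOnBasis, trip_inj, a, b]
  and_intros <;> module

lemma piF4_e4_zero_sub_e4_two : piF4 (e4 0 - e4 2) = trip (b 2) (b 0) (b 0) := by
  simp [piF4_e4, piOnBasis, trip_inj, a, b]
  and_intros <;> module

lemma piF4_e4_zero_add_e4_three : piF4 (e4 0 + e4 3) = -trip (b 1) (b 2) (b 2) := by
  simp [piF4_e4, piOnBasis, trip_inj, a, b]
  and_intros <;> module

lemma piF4_e4_zero_sub_e4_three : piF4 (e4 0 - e4 3) = -trip (b 1) (b 1) (b 1) := by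
  simp [piF4_e4, piOnBasis, trip_inj, a, b]
  and_intros <;> module

lemma piF4_e4_one_add_e4_two : piF4 (e4 1 + e4 2) = -trip (b 1) (b 0) (b 0) := by
  simp [piF4_e4, piOnBasis, trip_inj, a, b]
  and_intros <;> module

lemma piF4_e4_one_sub_e4_two : piF4 (e4 1 - e4 2) = -trip (a 1) 0 0 := by
  simp [piF4_e4, piOnBasis, trip_inj, a, b]
  and_intros <;> module

lemma piF4_e4_one_add_e4_three : piF4 (e4 1 + e4 3) = trip (b 2) (b 1) (b 1) := by
  simp [piF4_e4, piOnBasis, trip_inj, a, b]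
  and_intros <;> module

lemma piF4_e4_one_sub_e4_three : piF4 (e4 1 - e4 3) = trip (b 2) (b 2) (b 2) := by
  simp [piF4_e4, piOnBasis, trip_inj, a, b]
  and_intros <;> module

lemma piF4_e4_two_add_e4_three : piF4 (e4 2 + e4 3) = trip (b 0) (b 1) (b 1) := by
  simp [piF4_e4, piOnBasis, trip_inj, a, b]
  and_intros <;> module

lemma piF4_e4_two_sub_e4_three : piF4 (e4 2 - e4 3) = trip (b 0) (b 2) (b 2) := by
  simp [piF4_e4, piOnBasis, trip_inj, a, b]
  and_intros <;> module

lemma neg_mem_LongF4 {x : EuclideanSpace ℝ (Fin 4)} (hx : x ∈ LongF4) : -x ∈ LongF4 := by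
  obtain ⟨i, j, hij, ε, δ, hε, hδ, rfl⟩ := hx
  have neg_sign {c : ℝ} (hc : c = 1 ∨ c = -1) : -c = 1 ∨ -c = -1 := by
    rcases hc with rfl | rfl <;> norm_num
  exact ⟨i, j, hij, -ε, -δ, neg_sign hε, neg_sign hδ, by module⟩

lemma add_mem_LongF4 {i j : Fin 4} (hij : i < j) : e4 i + e4 j ∈ LongF4 :=
  ⟨i, j, hij, 1, 1, .inl rfl, .inl rfl, by module⟩

lemma sub_mem_LongF4 {i j : Fin 4} (hij : i < j) : e4 i - e4 j ∈ LongF4 :=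
  ⟨i, j, hij, 1, -1, .inl rfl, .inr rfl, by module⟩

lemma neg_mem_image_LongF4_iff {v : V9} : -v ∈ piF4 '' LongF4 ↔ v ∈ piF4 '' LongF4 := by
  have neg_mem {w : V9} (hw : w ∈ piF4 '' LongF4) : -w ∈ piF4 '' LongF4 := by
    obtain ⟨x, hx, rfl⟩ := hw
    exact ⟨-x, neg_mem_LongF4 hx, map_neg piF4 x⟩
  exact ⟨fun h => neg_neg v ▸ neg_mem h, neg_mem⟩

lemma neg_mem_ImE6_iff {v : V9} : -v ∈ ImE6 ↔ v ∈ ImE6 := by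
  have neg_mem {w : V9} (hw : w ∈ ImE6) : -w ∈ ImE6 := by
    rcases hw with ⟨i, rfl | rfl⟩ | ⟨i, j, rfl | rfl⟩
    · exact .inl ⟨i, .inr rfl⟩
    · exact .inl ⟨i, .inl (neg_neg _)⟩
    · exact .inr ⟨i, j, .inr rfl⟩
    · exact .inr ⟨i, j, .inl (neg_neg _)⟩
  exact ⟨fun h => neg_neg v ▸ neg_mem h, neg_mem⟩

lemma trip_a_mem_ImE6 (i : Fin 3) : trip (a i) 0 0 ∈ ImE6 :=
  .inl ⟨i, .inl rfl⟩

lemma trip_b_mem_ImE6 (i j : Fin 3) : trip (b i) (b j) (b j) ∈ ImE6 :=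
  .inr ⟨i, j, .inl rfl⟩

lemma mapsTo_piF4 : Set.MapsTo piF4 LongF4 ImE6 := by
  have pos_root : ∀ i j : Fin 4, i < j →
      piF4 (e4 i + e4 j) ∈ ImE6 ∧ piF4 (e4 i - e4 j) ∈ ImE6 := by
    intro i j hij
    fin_cases i <;> fin_cases j <;> simp only [Fin.reduceFinMk, Fin.isValue] at hij ⊢ <;>
      first
      | exact absurd hij (by decide)
      | simp only [piF4_e4_zero_add_e4_one, piF4_e4_zero_sub_e4_one, piF4_e4_zero_add_e4_two,
          piF4_e4_zero_sub_e4_two, piF4_e4_zero_add_e4_three, piF4_e4_zero_sub_e4_three,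
          piF4_e4_one_add_e4_two, piF4_e4_one_sub_e4_two, piF4_e4_one_add_e4_three,
          piF4_e4_one_sub_e4_three, piF4_e4_two_add_e4_three, piF4_e4_two_sub_e4_three,
          neg_mem_ImE6_iff, trip_a_mem_ImE6, trip_b_mem_ImE6, and_self]
  rintro v ⟨i, j, hij, ε, δ, hε, hδ, rfl⟩
  obtain ⟨h_add, h_sub⟩ := pos_root i j hij
  rcases hε with rfl | rfl <;> rcases hδ with rfl | rfl
  · convert h_add using 2; module
  · convert h_sub using 2; module
  · rw [← neg_mem_ImE6_iff, ← map_neg]; convert h_sub using 2; module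
  · rw [← neg_mem_ImE6_iff, ← map_neg]; convert h_add using 2; module

lemma surjOn_piF4 : Set.SurjOn piF4 LongF4 ImE6 := by
  suffices h : (∀ i, trip (a i) 0 0 ∈ piF4 '' LongF4) ∧
      ∀ i j, trip (b i) (b j) (b j) ∈ piF4 '' LongF4 by
    rintro v (⟨i, rfl | rfl⟩ | ⟨i, j, rfl | rfl⟩) <;>
      simp only [neg_mem_image_LongF4_iff, h.1, h.2]
  refine ⟨fun i => ?_, fun i j => ?_⟩
  · fin_cases i
    · exact ⟨_, add_mem_LongF4 (by decide), piF4_e4_zero_add_e4_one⟩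
    · exact neg_mem_image_LongF4_iff.1 ⟨_, sub_mem_LongF4 (by decide), piF4_e4_one_sub_e4_two⟩
    · exact neg_mem_image_LongF4_iff.1 ⟨_, add_mem_LongF4 (by decide), piF4_e4_zero_add_e4_two⟩
  · fin_cases i <;> fin_cases j
    · exact ⟨_, sub_mem_LongF4 (by decide), piF4_e4_zero_sub_e4_one⟩
    · exact ⟨_, add_mem_LongF4 (by decide), piF4_e4_two_add_e4_three⟩
    · exact ⟨_, sub_mem_LongF4 (by decide), piF4_e4_two_sub_e4_three⟩
    · exact neg_mem_image_LongF4_iff.1 ⟨_, add_mem_LongF4 (by decide), piF4_e4_one_add_e4_two⟩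
    · exact neg_mem_image_LongF4_iff.1 ⟨_, sub_mem_LongF4 (by decide), piF4_e4_zero_sub_e4_three⟩
    · exact neg_mem_image_LongF4_iff.1 ⟨_, add_mem_LongF4 (by decide), piF4_e4_zero_add_e4_three⟩
    · exact ⟨_, sub_mem_LongF4 (by decide), piF4_e4_zero_sub_e4_two⟩
    · exact ⟨_, add_mem_LongF4 (by decide), piF4_e4_one_add_e4_three⟩
    · exact ⟨_, sub_mem_LongF4 (by decide), piF4_e4_one_sub_e4_three⟩

/-- The assignment `π(e₁+e₂) = (a₁,0,0)`, `π(e₁−e₂) = (b₁,b₁,b₁)`,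
`π(e₃+e₄) = (b₁,b₂,b₂)`, `π(e₃−e₄) = (b₁,b₃,b₃)` extends to a linear isometry of `ℝ⁴`
into `ℝ⁹` mapping the 24 long roots of `F₄` bijectively onto the imaginary roots of
`E₆`. -/
theorem isometry_F4_to_E6 :
    ∃ π : EuclideanSpace ℝ (Fin 4) →ₗᵢ[ℝ] V9,
      π (e4 0 + e4 1) = trip (a 0) 0 0 ∧
      π (e4 0 - e4 1) = trip (b 0) (b 0) (b 0) ∧
      π (e4 2 + e4 3) = trip (b 0) (b 1) (b 1) ∧
      π (e4 2 - e4 3) = trip (b 0) (b 2) (b 2) ∧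
      Set.BijOn π LongF4 ImE6 :=
  ⟨piF4, piF4_e4_zero_add_e4_one, piF4_e4_zero_sub_e4_one, piF4_e4_two_add_e4_three,
    piF4_e4_two_sub_e4_three, mapsTo_piF4, piF4.injective.injOn, surjOn_piF4⟩
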